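/- arXiv:2401.11003 — 2 statements merged into one kernel-verified Lean document; each statement's English description precedes it below -/
import Mathlib

section
/- Let (q_n)_{n≥0} satisfy q_0 = 1 and q_n > 0, and define (γ_n)_{n≥0} by γ_0 = 1 and ∑_{k=0}^{n} q_{n−k} γ_k = 0 for n ≥ 1. Let (α_n) be any real sequence and set b_{m,n} = ∑_{l=0}^{m} A_{m−l}^{α_n−1} γ_l. Then for every sequence of real numbers S = (s_n) and every n, σ_n^{α_n}(S) = ∑_{k=0}^{n} (b_{n−k,n} Q_k / A_n^{α_n}) N_k^{(q)}(S), where Q_k = ∑_{j=0}^{k} q_j. -/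
open Finset

/-- `A_n^α = (1+α)(2+α)⋯(n+α)/n!`, with `A_0^α = 1`. -/
noncomputable def cesA (n : ℕ) (α : ℝ) : ℝ :=
  (∏ i ∈ Finset.range n, ((i : ℝ) + 1 + α)) / (n.factorial : ℝ)

/-- The `(C, α_n)` means with varying parameters:
`σ_n^{α_n}(S) = (1/A_n^{α_n}) ∑_{j=0}^{n} A_{n-j}^{α_n - 1} s_j`. -/
noncomputable def cesaroVar (α : ℕ → ℝ) (s : ℕ → ℝ) (n : ℕ) : ℝ :=
  (1 / cesA n (α n)) * ∑ j ∈ Finset.range (n + 1), cesA (n - j) (α n - 1) * s j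

/-- `Q_n = ∑_{k=0}^n q_k`. -/
noncomputable def bigQ (q : ℕ → ℝ) (n : ℕ) : ℝ := ∑ k ∈ Finset.range (n + 1), q k

/-- The Nörlund means `N_n^{(q)}(S) = (1/Q_n) ∑_{k=0}^{n} q_{n-k} s_k`. -/
noncomputable def norlund (q : ℕ → ℝ) (s : ℕ → ℝ) (n : ℕ) : ℝ :=
  (1 / bigQ q n) * ∑ k ∈ Finset.range (n + 1), q (n - k) * s k

/-
Writing `C, Γ, Q, S` for the generating functions of `A^{α_n-1}_m`, `γ`, `q`, `s`, the
hypothesis on `γ` says `Γ Q = 1` and `b_{·,n}` has generating function `C Γ`. Hence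
`∑_k b_{n-k,n} (Q S)_k = [x^n] (C Γ)(Q S) = [x^n] C S`, which is `A_n^{α_n} σ_n^{α_n}(S)`,
while `(Q S)_k = Q_k N_k^{(q)}(S)`.
-/

namespace PowerSeries

variable {R : Type*} [CommRing R]

theorem coeff_mk_mul_mk (f g : ℕ → R) (n : ℕ) :
    coeff n (mk f * mk g) = ∑ k ∈ range (n + 1), f (n - k) * g k := by
  rw [mul_comm, coeff_mul, Nat.sum_antidiagonal_eq_sum_range_succ
    (fun i j => coeff i (mk g) * coeff j (mk f))]
  simp only [coeff_mk, mul_comm]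

theorem mk_mul_mk_eq_one {q γ : ℕ → R} (h0 : q 0 * γ 0 = 1)
    (h : ∀ n, 1 ≤ n → ∑ k ∈ range (n + 1), q (n - k) * γ k = 0) :
    mk q * mk γ = 1 := by
  ext n
  rw [coeff_mk_mul_mk, coeff_one]
  rcases Nat.eq_zero_or_pos n with rfl | hn
  · simpa using h0
  · simpa [hn.ne'] using h n hn

theorem mk_convolution_eq_mk_mul_mk (f g : ℕ → R) :
    mk (fun n => ∑ k ∈ range (n + 1), f (n - k) * g k) = mk f * mk g := by
  ext n
  rw [coeff_mk, coeff_mk_mul_mk]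

theorem sum_convolution_mul_convolution_of_mk_mul_mk_eq_one {q γ : ℕ → R}
    (hqγ : mk q * mk γ = 1) (c s : ℕ → R) (n : ℕ) :
    ∑ k ∈ range (n + 1), (∑ l ∈ range (n - k + 1), c (n - k - l) * γ l) *
        ∑ j ∈ range (k + 1), q (k - j) * s j =
      ∑ j ∈ range (n + 1), c (n - j) * s j := by
  calc _ = coeff n (mk (fun m => ∑ l ∈ range (m + 1), c (m - l) * γ l) *
          mk (fun k => ∑ j ∈ range (k + 1), q (k - j) * s j)) := (coeff_mk_mul_mk _ _ n).symm
    _ = coeff n (mk c * (mk q * mk γ) * mk s) := by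
      rw [mk_convolution_eq_mk_mul_mk, mk_convolution_eq_mk_mul_mk]; ac_rfl
    _ = _ := by rw [hqγ, mul_one, coeff_mk_mul_mk]

end PowerSeries

theorem bigQ_pos {q : ℕ → ℝ} (hq : ∀ n, 0 < q n) (n : ℕ) : 0 < bigQ q n :=
  sum_pos (fun k _ => hq k) nonempty_range_add_one

/-- With `γ` the convolution inverse of `q` (`γ_0 = 1`, `∑_{k=0}^{n} q_{n-k} γ_k = 0`
for `n ≥ 1`) and `b_{m,n} = ∑_{l=0}^m A_{m-l}^{α_n - 1} γ_l`, the `(C,α_n)` means are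
a matrix transform of the Nörlund means:
`σ_n^{α_n}(S) = ∑_{k=0}^{n} (b_{n-k,n} Q_k / A_n^{α_n}) N_k^{(q)}(S)`. -/
theorem cesaroVar_eq_matrix_transform_of_norlund
    (q : ℕ → ℝ) (hq0 : q 0 = 1) (hqpos : ∀ n, 0 < q n)
    (γ : ℕ → ℝ) (hγ0 : γ 0 = 1)
    (hγ : ∀ n, 1 ≤ n → ∑ k ∈ Finset.range (n + 1), q (n - k) * γ k = 0)
    (α : ℕ → ℝ)
    (b : ℕ → ℕ → ℝ)
    (hb : ∀ m n, b m n = ∑ l ∈ Finset.range (m + 1), cesA (m - l) (α n - 1) * γ l)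
    (s : ℕ → ℝ) (n : ℕ) :
    cesaroVar α s n =
      ∑ k ∈ Finset.range (n + 1),
        (b (n - k) n * bigQ q k / cesA n (α n)) * norlund q s k := by
  have hqγ := PowerSeries.mk_mul_mk_eq_one (q := q) (γ := γ) (by rw [hq0, hγ0, one_mul]) hγ
  rw [cesaroVar, ← PowerSeries.sum_convolution_mul_convolution_of_mk_mul_mk_eq_one hqγ
    (fun m => cesA m (α n - 1)), mul_sum]
  refine sum_congr rfl fun k _ => ?_
  have hQk := (bigQ_pos hqpos k).ne'
  rw [norlund, hb]
  field_simp
end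

section
/- Let (q_n)_{n≥0} satisfy q_0 = 1, q_n > 0, q_{n+1}/q_n ≥ q_n/q_{n−1} for n ≥ 1, and q_n/Q_n → 0 where Q_n = ∑_{k=0}^{n} q_k; let (γ_n) be defined by γ_0 = 1 and ∑_{k=0}^{n} q_{n−k} γ_k = 0 for n ≥ 1. Let (α_n) with α_n ∈ (0,1) satisfy q_m/q_{m−1} ≤ 1 − (1−α_n)/m for all m,n ≥ 1. If S = (s_n) is a sequence of real numbers with N_n^{(q)}(S) → s as n → ∞, then σ_n^{α_n}(S) → s as n → ∞. -/
open Finset Filter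

/-!
By Kaluza's theorem, log-convexity of `(q_n)` makes the coefficients `γ_m`, `m ≥ 1`, of the
reciprocal power series `1 / ∑ q_n x^n` nonpositive. With `a_p = A_p^{α_n - 1}`, the identity
`a = (a * γ) * q` of Cauchy products turns the numerator of `σ_n` into
`∑_k (a * γ)_{n-k} (q * s)_k`, so `σ_n = ∑_k w_{n,k} N_k` with
`w_{n,k} = (a * γ)_{n-k} Q_k / A_n^{α_n}`. The compatibility condition makes `A_p^{α_n - 1} / q_p`
nondecreasing in `p`; together with `γ_m ≤ 0` this gives `0 ≤ (a * γ)_p ≤ A_p^{α_n - 1}`.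
Hence the weights are nonnegative with row sums `1` and `w_{n,k} ≤ Q_k / (n - k + 1) → 0`, and
the Silverman–Toeplitz theorem transfers the limit.
-/

open scoped Topology

section CesaroNumbers

lemma cesA_succ (n : ℕ) (α : ℝ) : cesA (n + 1) α = cesA n α * ((n + 1 + α) / (n + 1)) := by
  simp only [cesA, prod_range_succ, Nat.factorial_succ]
  push_cast
  field_simp

lemma cesA_succ_sub_one (n : ℕ) (α : ℝ) : cesA (n + 1) (α - 1) = cesA n α * α / (n + 1) := by
  have hprod : ∏ i ∈ range (n + 1), ((i : ℝ) + 1 + (α - 1))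
      = α * ∏ i ∈ range n, ((i : ℝ) + 1 + α) := by
    rw [prod_range_succ', mul_comm]
    congr 1
    · simp
    · exact prod_congr rfl fun i _ => by push_cast; ring
  simp only [cesA, hprod, Nat.factorial_succ]
  push_cast
  field_simp

lemma cesA_pos {α : ℝ} (hα : -1 < α) (n : ℕ) : 0 < cesA n α :=
  div_pos (prod_pos fun i _ => by linarith [i.cast_nonneg (α := ℝ)]) (by positivity)

lemma sum_range_cesA_sub_one (n : ℕ) (α : ℝ) :
    ∑ j ∈ range (n + 1), cesA j (α - 1) = cesA n α := by
  induction n with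
  | zero => simp [cesA]
  | succ n ih =>
    rw [sum_range_succ, ih, cesA_succ_sub_one, cesA_succ]
    field_simp

lemma cesA_sub_one_antitone {β : ℝ} (hβ0 : 0 < β) (hβ1 : β ≤ 1) :
    Antitone fun n => cesA n (β - 1) :=
  antitone_nat_of_succ_le fun n => by
    rw [cesA_succ]
    refine mul_le_of_le_one_right (cesA_pos (by linarith) n).le ?_
    rw [div_le_one (by positivity)]
    linarith

lemma succ_mul_cesA_sub_one_le {β : ℝ} (hβ0 : 0 < β) (hβ1 : β ≤ 1) {m n : ℕ} (hmn : m ≤ n) :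
    (m + 1) * cesA m (β - 1) ≤ cesA n β :=
  calc (m + 1) * cesA m (β - 1) = ∑ _j ∈ range (m + 1), cesA m (β - 1) := by simp
    _ ≤ ∑ j ∈ range (m + 1), cesA j (β - 1) :=
      sum_le_sum fun j hj => cesA_sub_one_antitone hβ0 hβ1 (by simpa [Nat.lt_succ_iff] using hj)
    _ ≤ ∑ j ∈ range (n + 1), cesA j (β - 1) :=
      sum_le_sum_of_subset_of_nonneg (range_subset_range.2 (by omega))
        fun j _ _ => (cesA_pos (by linarith) j).le
    _ = cesA n β := sum_range_cesA_sub_one n β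

lemma cesA_sub_one_div_monotone {q : ℕ → ℝ} {β : ℝ} (hq : ∀ m, 0 < q m) (hβ : 0 < β)
    (hratio : ∀ m, 1 ≤ m → q m / q (m - 1) ≤ 1 - (1 - β) / m) :
    Monotone fun p => cesA p (β - 1) / q p :=
  monotone_nat_of_le_succ fun p => by
    have hstep : q (p + 1) / q p ≤ (p + 1 + (β - 1)) / (p + 1) := by
      convert hratio (p + 1) (by omega) using 1
      · simp
      · push_cast
        field_simp
        ring
    rw [div_le_div_iff₀ (hq p) (hq (p + 1)), cesA_succ, mul_assoc]
    refine mul_le_mul_of_nonneg_left ?_ (cesA_pos (by linarith) p).le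
    rw [div_le_iff₀ (hq p)] at hstep
    linarith

end CesaroNumbers

section Convolution

variable {R : Type*} [CommSemiring R]

lemma PowerSeries.mk_injective : Function.Injective (PowerSeries.mk : (ℕ → R) → PowerSeries R) :=
  fun a b h => funext fun n => by simpa using congrArg (PowerSeries.coeff n) h

def conv (a b : ℕ → R) (n : ℕ) : R := ∑ k ∈ range (n + 1), a (n - k) * b k

open PowerSeries in
lemma mk_conv (a b : ℕ → R) : mk (conv a b) = mk a * mk b := by
  ext n
  rw [mul_comm, coeff_mul,
    Nat.sum_antidiagonal_eq_sum_range_succ fun i j => coeff i (mk b) * coeff j (mk a)]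
  simp [conv, mul_comm]

lemma conv_comm (a b : ℕ → R) : conv a b = conv b a :=
  PowerSeries.mk_injective <| by rw [mk_conv, mk_conv, mul_comm]

open PowerSeries in
lemma conv_conv_cancel {q γ : ℕ → R} (hqγ : ∀ n, conv q γ n = if n = 0 then 1 else 0)
    (a f : ℕ → R) : conv (conv a γ) (conv q f) = conv a f := by
  have hinv : mk q * mk γ = 1 := by
    ext n
    rw [← mk_conv, coeff_mk, coeff_one, hqγ]
  apply PowerSeries.mk_injective
  calc mk (conv (conv a γ) (conv q f)) = mk a * mk f * (mk q * mk γ) := by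
        simp only [mk_conv]; ring
    _ = mk (conv a f) := by rw [hinv, mul_one, mk_conv]

lemma conv_eq_mul_add_sum (a b : ℕ → R) (n : ℕ) :
    conv a b n = a n * b 0 + ∑ k ∈ range n, a (n - (k + 1)) * b (k + 1) := by
  rw [conv, sum_range_succ', add_comm, Nat.sub_zero]

end Convolution

lemma nonpos_of_conv_eq_zero_of_ratio_monotone {q γ : ℕ → ℝ} (hq0 : q 0 = 1)
    (hq : ∀ m, 0 < q m) (hratio : Monotone fun m => q (m + 1) / q m) (hγ0 : γ 0 = 1)
    (hγ : ∀ m, 1 ≤ m → conv q γ m = 0) : ∀ m, 1 ≤ m → γ m ≤ 0 := by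
  intro m
  induction m using Nat.strong_induction_on with
  | _ m ih =>
  intro hm
  rcases m with _ | _ | n
  · omega
  · have h1 := hγ 1 le_rfl
    simp only [conv, sum_range_succ, range_one, sum_singleton, hγ0, hq0] at h1
    linarith [hq 1]
  · -- the relation at `n + 2` minus `q (n + 2) / q (n + 1)` times the one at `n + 1`
    have hrec : q (n + 1) * γ (n + 2) = ∑ k ∈ range (n + 2),
        (q (n + 2) * q (n + 1 - k) - q (n + 1) * q (n + 2 - k)) * γ k := by
      have h1 := hγ (n + 1) (by omega)
      have h2 := hγ (n + 2) (by omega)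
      rw [conv] at h1
      rw [conv, sum_range_succ, Nat.sub_self, hq0] at h2
      simp only [sub_mul, mul_assoc, sum_sub_distrib, ← mul_sum]
      linear_combination q (n + 1) * h2 - q (n + 2) * h1
    have hterm : ∀ k ∈ range (n + 2),
        (q (n + 2) * q (n + 1 - k) - q (n + 1) * q (n + 2 - k)) * γ k ≤ 0 := by
      intro k hk
      rw [mem_range] at hk
      rcases Nat.eq_zero_or_pos k with rfl | hk0
      · simp [mul_comm]
      have hcoef : q (n + 1) * q (n + 2 - k) ≤ q (n + 2) * q (n + 1 - k) := by
        have := hratio (show n + 1 - k ≤ n + 1 by omega)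
        rwa [div_le_div_iff₀ (hq _) (hq _), show n + 1 - k + 1 = n + 2 - k by omega,
          mul_comm] at this
      exact mul_nonpos_of_nonneg_of_nonpos (by linarith) (ih k hk hk0)
    have := sum_nonpos hterm
    rw [← hrec] at this
    exact nonpos_of_mul_nonpos_right this (hq (n + 1))

lemma conv_le_of_nonpos {a γ : ℕ → ℝ} (ha : ∀ p, 0 ≤ a p) (hγ0 : γ 0 = 1)
    (hγ : ∀ m, 1 ≤ m → γ m ≤ 0) (p : ℕ) : conv a γ p ≤ a p := by
  rw [conv_eq_mul_add_sum, hγ0, mul_one, add_le_iff_nonpos_right]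
  exact sum_nonpos fun k _ => mul_nonpos_of_nonneg_of_nonpos (ha _) (hγ _ (by omega))

lemma conv_nonneg_of_div_monotone {a q γ : ℕ → ℝ} (ha : 0 ≤ a 0) (hq : ∀ m, 0 < q m)
    (hmono : Monotone fun p => a p / q p) (hγ0 : γ 0 = 1) (hγ : ∀ m, 1 ≤ m → conv q γ m = 0)
    (hγneg : ∀ m, 1 ≤ m → γ m ≤ 0) (p : ℕ) : 0 ≤ conv a γ p := by
  rcases Nat.eq_zero_or_pos p with rfl | hp
  · simpa [conv, hγ0] using ha
  have hsum : ∑ k ∈ range p, q (p - (k + 1)) * γ (k + 1) = - q p := by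
    have := hγ p hp
    rw [conv_eq_mul_add_sum, hγ0] at this
    linarith
  have hle : a p / q p * ∑ k ∈ range p, q (p - (k + 1)) * γ (k + 1)
      ≤ ∑ k ∈ range p, a (p - (k + 1)) * γ (k + 1) := by
    rw [mul_sum]
    refine sum_le_sum fun k _ => ?_
    have hak : a (p - (k + 1)) ≤ a p / q p * q (p - (k + 1)) := by
      have := hmono (show p - (k + 1) ≤ p by omega)
      rwa [div_le_iff₀ (hq _)] at this
    rw [← mul_assoc]
    exact mul_le_mul_of_nonpos_right hak (hγneg _ (by omega))
  rw [hsum, mul_neg, div_mul_cancel₀ _ (hq p).ne'] at hle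
  rw [conv_eq_mul_add_sum, hγ0, mul_one]
  linarith

section Toeplitz

lemma tendsto_sum_range_mul_of_toeplitz_zero {w : ℕ → ℕ → ℝ} {t : ℕ → ℝ}
    (hw0 : ∀ n k, k ≤ n → 0 ≤ w n k) (hw1 : ∀ n, ∑ k ∈ range (n + 1), w n k ≤ 1)
    (hcol : ∀ k, Tendsto (fun n => w n k) atTop (𝓝 0)) (ht : Tendsto t atTop (𝓝 0)) :
    Tendsto (fun n => ∑ k ∈ range (n + 1), w n k * t k) atTop (𝓝 0) := by
  rw [Metric.tendsto_nhds]
  intro ε hε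
  obtain ⟨K, hK⟩ := eventually_atTop.1 <| (Metric.tendsto_nhds.1 ht) (ε / 2) (half_pos hε)
  have hhead : Tendsto (fun n => ∑ k ∈ range K, w n k * t k) atTop (𝓝 0) := by
    simpa using tendsto_finsetSum (range K) fun k _ => (hcol k).mul_const (t k)
  filter_upwards [(Metric.tendsto_nhds.1 hhead) (ε / 2) (half_pos hε), eventually_ge_atTop K]
    with n hn hnK
  have htail : |∑ k ∈ Ico K (n + 1), w n k * t k| ≤ ε / 2 :=
    calc |∑ k ∈ Ico K (n + 1), w n k * t k| ≤ ∑ k ∈ Ico K (n + 1), w n k * (ε / 2) :=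
          abs_sum_le_sum_abs _ _ |>.trans <| sum_le_sum fun k hk => by
            rw [mem_Ico] at hk
            rw [abs_mul, abs_of_nonneg (hw0 n k (by omega))]
            gcongr
            · exact hw0 n k (by omega)
            · simpa using (hK k hk.1).le
      _ ≤ ∑ k ∈ range (n + 1), w n k * (ε / 2) :=
          sum_le_sum_of_subset_of_nonneg
            (range_eq_Ico (n + 1) ▸ Ico_subset_Ico_left (Nat.zero_le K))
            fun k hk _ => mul_nonneg (hw0 n k (Nat.lt_succ_iff.1 (mem_range.1 hk))) (half_pos hε).le
      _ ≤ ε / 2 := by rw [← sum_mul]; nlinarith [hw1 n]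
  rw [Real.dist_eq, sub_zero, ← sum_range_add_sum_Ico _ (by omega : K ≤ n + 1)]
  rw [Real.dist_eq, sub_zero] at hn
  exact (abs_add_le _ _).trans_lt (by linarith)

lemma tendsto_sum_range_mul_of_toeplitz {w : ℕ → ℕ → ℝ} {t : ℕ → ℝ} {l : ℝ}
    (hw0 : ∀ n k, k ≤ n → 0 ≤ w n k) (hw1 : ∀ n, ∑ k ∈ range (n + 1), w n k = 1)
    (hcol : ∀ k, Tendsto (fun n => w n k) atTop (𝓝 0)) (ht : Tendsto t atTop (𝓝 l)) :
    Tendsto (fun n => ∑ k ∈ range (n + 1), w n k * t k) atTop (𝓝 l) := by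
  have h := (tendsto_sum_range_mul_of_toeplitz_zero hw0 (fun n => (hw1 n).le) hcol
    (tendsto_sub_nhds_zero_iff.2 ht)).add_const l
  rw [zero_add] at h
  refine h.congr fun n => ?_
  simp [mul_sub, sum_sub_distrib, ← sum_mul, hw1]

end Toeplitz

section Weights

noncomputable def cesaroNorlundWeight (q γ : ℕ → ℝ) (β : ℝ) (n k : ℕ) : ℝ :=
  conv (fun p => cesA p (β - 1)) γ (n - k) * bigQ q k / cesA n β

lemma bigQ_eq_conv (q : ℕ → ℝ) : bigQ q = conv (fun _ => 1) q := by
  ext n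
  simp [bigQ, conv]

lemma cesaroVar_eq_sum_weight_mul_norlund {q γ : ℕ → ℝ}
    (hqγ : ∀ n, conv q γ n = if n = 0 then 1 else 0) (hQ : ∀ k, bigQ q k ≠ 0)
    (α s : ℕ → ℝ) (n : ℕ) :
    cesaroVar α s n = ∑ k ∈ range (n + 1), cesaroNorlundWeight q γ (α n) n k * norlund q s k := by
  calc cesaroVar α s n
      = 1 / cesA n (α n) * conv (conv (fun p => cesA p (α n - 1)) γ) (conv q s) n := by
        rw [conv_conv_cancel hqγ]; rfl
    _ = _ := by
        rw [conv, mul_sum]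
        refine sum_congr rfl fun k _ => ?_
        rw [cesaroNorlundWeight, norlund, ← conv]
        field_simp [hQ k]

lemma sum_cesaroNorlundWeight {q γ : ℕ → ℝ} (hqγ : ∀ n, conv q γ n = if n = 0 then 1 else 0)
    {β : ℝ} (n : ℕ) (hβ : cesA n β ≠ 0) :
    ∑ k ∈ range (n + 1), cesaroNorlundWeight q γ β n k = 1 := by
  have h := congrFun (conv_conv_cancel hqγ (fun p => cesA p (β - 1)) fun _ => 1) n
  rw [conv_comm q, ← bigQ_eq_conv, conv_comm _ (fun _ => 1)] at h
  simp only [cesaroNorlundWeight]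
  rw [← sum_div, div_eq_one_iff_eq hβ]
  exact h.trans (by simp [conv, sum_range_cesA_sub_one])

lemma cesaroNorlundWeight_nonneg {q γ : ℕ → ℝ} {β : ℝ} (hq : ∀ m, 0 < q m) (hγ0 : γ 0 = 1)
    (hγ : ∀ m, 1 ≤ m → conv q γ m = 0) (hγneg : ∀ m, 1 ≤ m → γ m ≤ 0) (hβ : 0 < β)
    (hmono : Monotone fun p => cesA p (β - 1) / q p) (n k : ℕ) :
    0 ≤ cesaroNorlundWeight q γ β n k := by
  have hQ : 0 ≤ bigQ q k := sum_nonneg fun m _ => (hq m).le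
  have hD :=
    conv_nonneg_of_div_monotone (cesA_pos (by linarith) 0).le hq hmono hγ0 hγ hγneg (n - k)
  exact div_nonneg (mul_nonneg hD hQ) (cesA_pos (by linarith) n).le

lemma cesaroNorlundWeight_le {q γ : ℕ → ℝ} {β : ℝ} (hq : ∀ m, 0 < q m) (hγ0 : γ 0 = 1)
    (hγneg : ∀ m, 1 ≤ m → γ m ≤ 0) (hβ0 : 0 < β) (hβ1 : β ≤ 1) (n k : ℕ) :
    cesaroNorlundWeight q γ β n k ≤ bigQ q k / ((n - k : ℕ) + 1) := by
  have hQ : 0 ≤ bigQ q k := sum_nonneg fun m _ => (hq m).le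
  have hD :=
    conv_le_of_nonpos (fun p => (cesA_pos (by linarith : -1 < β - 1) p).le) hγ0 hγneg (n - k)
  have hA := succ_mul_cesA_sub_one_le hβ0 hβ1 (Nat.sub_le n k)
  rw [cesaroNorlundWeight, div_le_div_iff₀ (cesA_pos (by linarith) n) (by positivity)]
  calc conv (fun p => cesA p (β - 1)) γ (n - k) * bigQ q k * ((n - k : ℕ) + 1)
      ≤ (((n - k : ℕ) + 1) * cesA (n - k) (β - 1)) * bigQ q k := by
        rw [mul_right_comm, mul_comm _ (cesA _ _)]
        gcongr
    _ ≤ bigQ q k * cesA n β := by rw [mul_comm]; gcongr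

end Weights

theorem cesaroVar_tendsto_of_norlund_tendsto_general
    (q : ℕ → ℝ) (hq0 : q 0 = 1) (hqpos : ∀ m, 0 < q m)
    (hqconv : ∀ m, 1 ≤ m → q m / q (m - 1) ≤ q (m + 1) / q m)
    (γ : ℕ → ℝ) (hγ0 : γ 0 = 1)
    (hγ : ∀ m, 1 ≤ m → ∑ k ∈ Finset.range (m + 1), q (m - k) * γ k = 0)
    (α : ℕ → ℝ) (hα : ∀ n, α n ∈ Set.Ioo (0 : ℝ) 1)
    (hcond : ∀ m n : ℕ, 1 ≤ m → q m / q (m - 1) ≤ 1 - (1 - α n) / m)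
    (s : ℕ → ℝ) (l : ℝ)
    (h : Filter.Tendsto (norlund q s) Filter.atTop (nhds l)) :
    Filter.Tendsto (cesaroVar α s) Filter.atTop (nhds l) := by
  have hqγ : ∀ n, conv q γ n = if n = 0 then 1 else 0 := fun n => by
    rcases Nat.eq_zero_or_pos n with rfl | hn
    · simp [conv, hq0, hγ0]
    · simpa [conv, hn.ne'] using hγ n hn
  have hratio : Monotone fun m => q (m + 1) / q m :=
    monotone_nat_of_le_succ fun m => by simpa using hqconv (m + 1) (by omega)
  have hγneg := nonpos_of_conv_eq_zero_of_ratio_monotone hq0 hqpos hratio hγ0 hγ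
  have hmono n := cesA_sub_one_div_monotone hqpos (hα n).1 (hcond · n)
  have hcol k : Tendsto (fun n => cesaroNorlundWeight q γ (α n) n k) atTop (𝓝 0) := by
    have hlim : Tendsto (fun n : ℕ => bigQ q k / ((n - k : ℕ) + 1 : ℝ)) atTop (𝓝 0) :=
      tendsto_const_nhds.div_atTop <| tendsto_atTop_add_const_right _ 1 <|
        tendsto_natCast_atTop_atTop.comp (tendsto_sub_atTop_nat k)
    exact squeeze_zero
      (fun n => cesaroNorlundWeight_nonneg hqpos hγ0 hγ hγneg (hα n).1 (hmono n) n k)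
      (fun n => cesaroNorlundWeight_le hqpos hγ0 hγneg (hα n).1 (hα n).2.le n k) hlim
  have hQ k : bigQ q k ≠ 0 := (sum_pos (fun m _ => hqpos m) nonempty_range_add_one).ne'
  rw [tendsto_congr (cesaroVar_eq_sum_weight_mul_norlund hqγ hQ α s)]
  exact tendsto_sum_range_mul_of_toeplitz
    (fun n k _ => cesaroNorlundWeight_nonneg hqpos hγ0 hγ hγneg (hα n).1 (hmono n) n k)
    (fun n => sum_cesaroNorlundWeight hqγ n (cesA_pos (by linarith [(hα n).1]) n).ne') hcol h

/-- Under Hardy's conditions on `(q_n)` and the compatibility condition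
`q_m/q_{m-1} ≤ 1 - (1-α_n)/m` with `α_n ∈ (0,1)`, convergence of the Nörlund means
`N_n^{(q)}(S) → s` implies convergence of the `(C,α_n)` means `σ_n^{α_n}(S) → s`. -/
theorem cesaroVar_tendsto_of_norlund_tendsto
    (q : ℕ → ℝ) (hq0 : q 0 = 1) (hqpos : ∀ m, 0 < q m)
    (hqconv : ∀ m, 1 ≤ m → q m / q (m - 1) ≤ q (m + 1) / q m)
    (hqQ : Filter.Tendsto (fun m => q m / bigQ q m) Filter.atTop (nhds 0))
    (γ : ℕ → ℝ) (hγ0 : γ 0 = 1)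
    (hγ : ∀ m, 1 ≤ m → ∑ k ∈ Finset.range (m + 1), q (m - k) * γ k = 0)
    (α : ℕ → ℝ) (hα : ∀ n, α n ∈ Set.Ioo (0 : ℝ) 1)
    (hcond : ∀ m n : ℕ, 1 ≤ m → q m / q (m - 1) ≤ 1 - (1 - α n) / m)
    (s : ℕ → ℝ) (l : ℝ)
    (h : Filter.Tendsto (norlund q s) Filter.atTop (nhds l)) :
    Filter.Tendsto (cesaroVar α s) Filter.atTop (nhds l) :=
  cesaroVar_tendsto_of_norlund_tendsto_general q hq0 hqpos hqconv γ hγ0 hγ α hα hcond s l h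
end
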